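/- Let λ₀ ∈ ℝ^ν, h > 0, s ≥ 1, and let (u, v) : [0,h] → ℝ^m × ℝ^m be continuously differentiable with u(0) = q₀, v(0) = p₀, and u̇(ch) = Σ_{j=0}^{s−1} P̂_j(c)·γ_j(v), v̇(ch) = −Σ_{j=0}^{s−1} P̂_j(c)·[ψ_j(u) + ρ_j(u)λ₀] for all c ∈ [0,1], where γ_j(v) := M⁻¹∫₀¹ P̂_j(c)·v(ch) dc ∈ ℝ^m, ψ_j(u) := ∫₀¹ P̂_j(c)·∇U(u(ch)) dc ∈ ℝ^m, and ρ_j(u) := ∫₀¹ P̂_j(c)·∇g(u(ch)) dc ∈ ℝ^{m×ν}. Then the augmented Hamiltonian is exactly conserved: Ĥ(u(h), v(h), λ₀) = Ĥ(q₀, p₀, λ₀). -/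

import Mathlib

open MeasureTheory Matrix Set

noncomputable def grad {m : ℕ} (f : (Fin m → ℝ) → ℝ) (q : Fin m → ℝ) : Fin m → ℝ :=
  fun i => fderiv ℝ f q (Pi.single i 1)

noncomputable def gradMat {m ν : ℕ} (g : (Fin m → ℝ) → (Fin ν → ℝ)) (q : Fin m → ℝ) :
    Matrix (Fin m) (Fin ν) ℝ :=
  Matrix.of fun i a => fderiv ℝ (fun x => g x a) q (Pi.single i 1)

noncomputable def hessVec {m ν : ℕ} (g : (Fin m → ℝ) → (Fin ν → ℝ)) (q v w : Fin m → ℝ) :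
    Fin ν → ℝ :=
  fun a => fderiv ℝ (fun x => fderiv ℝ (fun y => g y a) x w) q v

noncomputable def lagMult {m ν : ℕ} (M : Matrix (Fin m) (Fin m) ℝ)
    (U : (Fin m → ℝ) → ℝ) (g : (Fin m → ℝ) → (Fin ν → ℝ)) (q p : Fin m → ℝ) : Fin ν → ℝ :=
  ((gradMat g q)ᵀ * M⁻¹ * gradMat g q)⁻¹ *ᵥ
    (hessVec g q (M⁻¹ *ᵥ p) (M⁻¹ *ᵥ p) - (gradMat g q)ᵀ *ᵥ (M⁻¹ *ᵥ grad U q))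

noncomputable def Ham {m : ℕ} (M : Matrix (Fin m) (Fin m) ℝ)
    (U : (Fin m → ℝ) → ℝ) (q p : Fin m → ℝ) : ℝ :=
  (1 / 2) * (p ⬝ᵥ (M⁻¹ *ᵥ p)) + U q

noncomputable def HamHat {m ν : ℕ} (M : Matrix (Fin m) (Fin m) ℝ)
    (U : (Fin m → ℝ) → ℝ) (g : (Fin m → ℝ) → (Fin ν → ℝ))
    (q p : Fin m → ℝ) (lam : Fin ν → ℝ) : ℝ :=
  Ham M U q p + lam ⬝ᵥ g q

noncomputable def shiftedLegendre (j : ℕ) (x : ℝ) : ℝ :=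
  (Real.sqrt (2 * j + 1) / (Nat.factorial j)) * iteratedDeriv j (fun y => (y ^ 2 - y) ^ j) x

noncomputable def gammaC {m : ℕ} (M : Matrix (Fin m) (Fin m) ℝ)
    (h : ℝ) (v : ℝ → Fin m → ℝ) (j : ℕ) : Fin m → ℝ :=
  M⁻¹ *ᵥ ∫ c in (0:ℝ)..1, shiftedLegendre j c • v (c * h)

noncomputable def psiC {m : ℕ} (U : (Fin m → ℝ) → ℝ)
    (h : ℝ) (u : ℝ → Fin m → ℝ) (j : ℕ) : Fin m → ℝ :=
  ∫ c in (0:ℝ)..1, shiftedLegendre j c • grad U (u (c * h))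

noncomputable def rhoC {m ν : ℕ} (g : (Fin m → ℝ) → (Fin ν → ℝ))
    (h : ℝ) (u : ℝ → Fin m → ℝ) (j : ℕ) : Matrix (Fin m) (Fin ν) ℝ :=
  Matrix.of fun i a => ∫ c in (0:ℝ)..1, shiftedLegendre j c * gradMat g (u (c * h)) i a

/-! ### Auxiliary lemmas -/

lemma continuous_shiftedLegendre (j : ℕ) : Continuous (shiftedLegendre j) := by
  apply Continuous.mul continuous_const
  exact ContDiff.continuous_iteratedDeriv j (ContDiff.pow (by fun_prop) j) le_top

noncomputable def dotCLM {n : ℕ} (w : Fin n → ℝ) : (Fin n → ℝ) →L[ℝ] ℝ :=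
  LinearMap.toContinuousLinearMap
    { toFun := fun x => x ⬝ᵥ w
      map_add' := fun x y => add_dotProduct x y w
      map_smul' := fun r x => smul_dotProduct r x w }

@[simp] lemma dotCLM_apply {n : ℕ} (w x : Fin n → ℝ) : dotCLM w x = x ⬝ᵥ w := rfl

noncomputable def mulVecCLM {n : ℕ} (A : Matrix (Fin n) (Fin n) ℝ) :
    (Fin n → ℝ) →L[ℝ] (Fin n → ℝ) :=
  LinearMap.toContinuousLinearMap A.mulVecLin

@[simp] lemma mulVecCLM_apply {n : ℕ} (A : Matrix (Fin n) (Fin n) ℝ) (x : Fin n → ℝ) :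
    mulVecCLM A x = A *ᵥ x := rfl

lemma clm_eq_dot {n : ℕ} (L : (Fin n → ℝ) →L[ℝ] ℝ) (w : Fin n → ℝ) :
    L w = (fun i => L (Pi.single i 1)) ⬝ᵥ w := by
  have hw : w = ∑ i, w i • (Pi.single i 1 : Fin n → ℝ) := by
    funext j
    simp [Pi.single_apply, Finset.sum_apply, mul_comm]
  conv_lhs => rw [hw]
  rw [map_sum]
  simp [dotProduct, mul_comm]

lemma hasDerivAt_dot {n : ℕ} {f g : ℝ → Fin n → ℝ} {f' g' : Fin n → ℝ} {x : ℝ}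
    (hf : HasDerivAt f f' x) (hg : HasDerivAt g g' x) :
    HasDerivAt (fun t => f t ⬝ᵥ g t) (f' ⬝ᵥ g x + f x ⬝ᵥ g') x := by
  have h1 : ∀ i, HasDerivAt (fun t => f t i) (f' i) x := hasDerivAt_pi.1 hf
  have h2 : ∀ i, HasDerivAt (fun t => g t i) (g' i) x := hasDerivAt_pi.1 hg
  have : HasDerivAt (fun t => ∑ i, f t i * g t i)
      (∑ i, (f' i * g x i + f x i * g' i)) x :=
    HasDerivAt.fun_sum fun i _ => (h1 i).mul (h2 i)
  simpa [dotProduct, Finset.sum_add_distrib] using this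

lemma intInt_dot_const {n : ℕ} {f : ℝ → Fin n → ℝ}
    (hf : IntervalIntegrable f volume 0 1) (w : Fin n → ℝ) :
    ∫ c in (0:ℝ)..1, f c ⬝ᵥ w = (∫ c in (0:ℝ)..1, f c) ⬝ᵥ w := by
  simpa using (dotCLM w).intervalIntegral_comp_comm hf

lemma intInt_apply {n : ℕ} {f : ℝ → Fin n → ℝ}
    (hf : IntervalIntegrable f volume 0 1) (i : Fin n) :
    (∫ c in (0:ℝ)..1, f c) i = ∫ c in (0:ℝ)..1, f c i := by
  simpa using ((ContinuousLinearMap.proj (R := ℝ) (φ := fun _ : Fin n => ℝ) i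
    ).intervalIntegral_comp_comm hf).symm

lemma intInt_mulVec {n : ℕ} {f : ℝ → Fin n → ℝ}
    (hf : IntervalIntegrable f volume 0 1) (A : Matrix (Fin n) (Fin n) ℝ) :
    ∫ c in (0:ℝ)..1, A *ᵥ f c = A *ᵥ ∫ c in (0:ℝ)..1, f c := by
  simpa using (mulVecCLM A).intervalIntegral_comp_comm hf

theorem stmt13 {m ν : ℕ} (hmn : ν < m)
    (M : Matrix (Fin m) (Fin m) ℝ) (hM : M.PosDef)
    (U : (Fin m → ℝ) → ℝ) (hU : ContDiff ℝ (⊤ : ℕ∞) U)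
    (g : (Fin m → ℝ) → (Fin ν → ℝ)) (hg : ContDiff ℝ (⊤ : ℕ∞) g)
    (lam₀ : Fin ν → ℝ) (h : ℝ) (hh : 0 < h) (s : ℕ) (hs : 1 ≤ s)
    (q₀ p₀ : Fin m → ℝ) (u v : ℝ → Fin m → ℝ)
    (hu0 : u 0 = q₀) (hv0 : v 0 = p₀)
    (hu : ∀ c ∈ Set.Icc (0:ℝ) 1,
      HasDerivAt u (∑ j ∈ Finset.range s, shiftedLegendre j c • gammaC M h v j) (c * h))
    (hv : ∀ c ∈ Set.Icc (0:ℝ) 1,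
      HasDerivAt v
        (-(∑ j ∈ Finset.range s,
          shiftedLegendre j c • (psiC U h u j + rhoC g h u j *ᵥ lam₀))) (c * h)) :
    HamHat M U g (u h) (v h) lam₀ = HamHat M U g q₀ p₀ lam₀ := by
  have huIcc : uIcc (0:ℝ) 1 = Icc 0 1 := uIcc_of_le zero_le_one
  set P : ℕ → ℝ → ℝ := shiftedLegendre with hP
  set γ : ℕ → Fin m → ℝ := gammaC M h v with hγ
  set w : ℕ → Fin m → ℝ := fun j => psiC U h u j + rhoC g h u j *ᵥ lam₀ with hw
  set A : ℝ → Fin m → ℝ := fun c => ∑ j ∈ Finset.range s, P j c • γ j with hA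
  set B : ℝ → Fin m → ℝ := fun c => -(∑ j ∈ Finset.range s, P j c • w j) with hB
  set X : ℝ → Fin m → ℝ := fun c => grad U (u (c * h)) + gradMat g (u (c * h)) *ᵥ lam₀ with hX
  set W : ℝ → Fin m → ℝ := fun c => M⁻¹ *ᵥ v (c * h) with hW
  set F : ℝ → ℝ := fun c => HamHat M U g (u (c * h)) (v (c * h)) lam₀ with hF
  set F' : ℝ → ℝ := fun c => h * (X c ⬝ᵥ A c + W c ⬝ᵥ B c) with hF'
  -- symmetry of M⁻¹
  have hMsymm : Mᵀ = M := hM.isHermitian.eq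
  have hMinv : M⁻¹ᵀ = M⁻¹ := by rw [Matrix.transpose_nonsing_inv, hMsymm]
  -- derivatives of the composites
  have hucomp : ∀ c ∈ Icc (0:ℝ) 1, HasDerivAt (fun t => u (t * h)) (h • A c) c := by
    intro c hc
    have h1 := (hu c hc).scomp c ((hasDerivAt_id c).mul_const h)
    simp at h1
    exact h1
  have hvcomp : ∀ c ∈ Icc (0:ℝ) 1, HasDerivAt (fun t => v (t * h)) (h • B c) c := by
    intro c hc
    have h1 := (hv c hc).scomp c ((hasDerivAt_id c).mul_const h)
    exact h1.congr_deriv (by rw [hB]; simp [hw, smul_add])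
  -- continuity facts
  have cP : ∀ j, Continuous (P j) := continuous_shiftedLegendre
  have cu : ContinuousOn (fun c => u (c * h)) (Icc 0 1) :=
    fun c hc => ((hucomp c hc).continuousAt).continuousWithinAt
  have cv : ContinuousOn (fun c => v (c * h)) (Icc 0 1) :=
    fun c hc => ((hvcomp c hc).continuousAt).continuousWithinAt
  have cgradU : Continuous (grad U) := by
    apply continuous_pi
    intro i
    exact (ContinuousLinearMap.apply ℝ ℝ (Pi.single i 1)).continuous.comp
      (hU.continuous_fderiv (by simp))
  have cgradMat : ∀ i a, Continuous (fun q => gradMat g q i a) := by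
    intro i a
    exact (ContinuousLinearMap.apply ℝ ℝ (Pi.single i 1)).continuous.comp
      ((contDiff_pi.1 hg a).continuous_fderiv (by simp))
  have cX : ContinuousOn X (Icc 0 1) := by
    apply ContinuousOn.add (cgradU.comp_continuousOn cu)
    apply continuousOn_pi.2
    intro i
    simp only [Matrix.mulVec, dotProduct]
    exact continuousOn_finset_sum _ fun a _ =>
      (((cgradMat i a).comp_continuousOn cu).mul continuousOn_const)
  have cW : ContinuousOn W (Icc 0 1) := by
    apply continuousOn_pi.2
    intro i
    simp only [hW, Matrix.mulVec, dotProduct]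
    exact continuousOn_finset_sum _ fun k _ =>
      continuousOn_const.mul ((continuous_apply k).comp_continuousOn cv)
  have cA : Continuous A := by
    apply continuous_finset_sum
    intro j _
    exact (cP j).smul continuous_const
  have cB : Continuous B := by
    apply Continuous.neg
    apply continuous_finset_sum
    intro j _
    exact (cP j).smul continuous_const
  -- interval integrability facts
  have iPu : ∀ j, IntervalIntegrable (fun c => P j c • u (c * h)) volume 0 1 := by
    intro j
    apply ContinuousOn.intervalIntegrable
    rw [huIcc]; exact ((cP j).continuousOn).smul cu
  have iPv : ∀ j, IntervalIntegrable (fun c => P j c • v (c * h)) volume 0 1 := by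
    intro j
    apply ContinuousOn.intervalIntegrable
    rw [huIcc]; exact ((cP j).continuousOn).smul cv
  have iPX : ∀ j, IntervalIntegrable (fun c => P j c • X c) volume 0 1 := by
    intro j
    apply ContinuousOn.intervalIntegrable
    rw [huIcc]; exact ((cP j).continuousOn).smul cX
  have iPW : ∀ j, IntervalIntegrable (fun c => P j c • W c) volume 0 1 := by
    intro j
    apply ContinuousOn.intervalIntegrable
    rw [huIcc]; exact ((cP j).continuousOn).smul cW
  have iPgU : ∀ j, IntervalIntegrable (fun c => P j c • grad U (u (c * h))) volume 0 1 := by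
    intro j
    apply ContinuousOn.intervalIntegrable
    rw [huIcc]; exact ((cP j).continuousOn).smul (cgradU.comp_continuousOn cu)
  have iPgl : ∀ j, IntervalIntegrable
      (fun c => P j c • (gradMat g (u (c * h)) *ᵥ lam₀)) volume 0 1 := by
    intro j
    apply ContinuousOn.intervalIntegrable
    rw [huIcc]
    apply ContinuousOn.smul ((cP j).continuousOn)
    apply continuousOn_pi.2
    intro i
    simp only [Matrix.mulVec, dotProduct]
    exact continuousOn_finset_sum _ fun a _ =>
      (((cgradMat i a).comp_continuousOn cu).mul continuousOn_const)
  have iXA : IntervalIntegrable (fun c => X c ⬝ᵥ A c) volume 0 1 := by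
    apply ContinuousOn.intervalIntegrable
    rw [huIcc]
    simp only [dotProduct]
    exact continuousOn_finset_sum _ fun i _ =>
      ((continuousOn_pi.1 cX i).mul ((continuous_apply i).comp cA).continuousOn)
  have iWB : IntervalIntegrable (fun c => W c ⬝ᵥ B c) volume 0 1 := by
    apply ContinuousOn.intervalIntegrable
    rw [huIcc]
    simp only [dotProduct]
    exact continuousOn_finset_sum _ fun i _ =>
      ((continuousOn_pi.1 cW i).mul ((continuous_apply i).comp cB).continuousOn)
  have iF' : IntervalIntegrable F' volume 0 1 := by
    simpa [hF', mul_add, mul_comm] using ((iXA.add iWB).const_mul h)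
  -- the derivative of F
  have hFderiv : ∀ c ∈ uIcc (0:ℝ) 1, HasDerivAt F (F' c) c := by
    rw [huIcc]
    intro c hc
    have hVc := hvcomp c hc
    have hUc := hucomp c hc
    -- quadratic part
    have hMV : HasDerivAt (fun t => M⁻¹ *ᵥ v (t * h)) (M⁻¹ *ᵥ (h • B c)) c := by
      have := ((mulVecCLM M⁻¹).hasFDerivAt.comp_hasDerivAt c hVc)
      rw [Matrix.mulVec_smul]
      simp [Matrix.mulVec_smul] at this
      exact this
    have hquad : HasDerivAt (fun t => v (t * h) ⬝ᵥ (M⁻¹ *ᵥ v (t * h)))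
        ((h • B c) ⬝ᵥ (M⁻¹ *ᵥ v (c * h)) + v (c * h) ⬝ᵥ (M⁻¹ *ᵥ (h • B c))) c :=
      hasDerivAt_dot hVc hMV
    -- potential part
    have hUpart : HasDerivAt (fun t => U (u (t * h))) (grad U (u (c * h)) ⬝ᵥ (h • A c)) c := by
      have hd := ((hU.differentiable (by simp) (u (c * h))).hasFDerivAt).comp_hasDerivAt c hUc
      have : fderiv ℝ U (u (c * h)) (h • A c) = grad U (u (c * h)) ⬝ᵥ (h • A c) :=
        clm_eq_dot _ _
      rwa [this] at hd
    -- constraint part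
    have hgpart : HasDerivAt (fun t => lam₀ ⬝ᵥ g (u (t * h)))
        ((gradMat g (u (c * h)) *ᵥ lam₀) ⬝ᵥ (h • A c)) c := by
      have hda : ∀ a : Fin ν, HasDerivAt (fun t => g (u (t * h)) a)
          ((fun i => gradMat g (u (c * h)) i a) ⬝ᵥ (h • A c)) c := by
        intro a
        have hd := (((contDiff_pi.1 hg a).differentiable (by simp)
          (u (c * h))).hasFDerivAt).comp_hasDerivAt c hUc
        have : fderiv ℝ (fun x => g x a) (u (c * h)) (h • A c)
            = (fun i => gradMat g (u (c * h)) i a) ⬝ᵥ (h • A c) := clm_eq_dot _ _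
        rwa [this] at hd
      have hsum : HasDerivAt (fun t => ∑ a, lam₀ a * g (u (t * h)) a)
          (∑ a, lam₀ a * ((fun i => gradMat g (u (c * h)) i a) ⬝ᵥ (h • A c))) c :=
        HasDerivAt.fun_sum fun a _ => (hda a).const_mul (lam₀ a)
      have e1 : (fun t => lam₀ ⬝ᵥ g (u (t * h))) = fun t => ∑ a, lam₀ a * g (u (t * h)) a := by
        funext t; simp [dotProduct]
      have e2 : (gradMat g (u (c * h)) *ᵥ lam₀) ⬝ᵥ (h • A c)
          = ∑ a, lam₀ a * ((fun i => gradMat g (u (c * h)) i a) ⬝ᵥ (h • A c)) := by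
        simp only [dotProduct, Matrix.mulVec, Finset.mul_sum, Finset.sum_mul]
        rw [Finset.sum_comm]
        apply Finset.sum_congr rfl; intro a _
        apply Finset.sum_congr rfl; intro i _
        ring
      rw [e1, e2]; exact hsum
    have hcomb := ((hquad.const_mul ((1:ℝ)/2)).add hUpart).add hgpart
    have hFeq : F = fun t => (1/2 : ℝ) * (v (t * h) ⬝ᵥ (M⁻¹ *ᵥ v (t * h)))
        + U (u (t * h)) + lam₀ ⬝ᵥ g (u (t * h)) := by
      funext t; simp [hF, HamHat, Ham]
    rw [hFeq]
    refine hcomb.congr_deriv ?_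
    -- algebra: F' c equals the combined derivative
    have symmdot : v (c * h) ⬝ᵥ (M⁻¹ *ᵥ B c) = W c ⬝ᵥ B c := by
      rw [Matrix.dotProduct_mulVec, ← Matrix.mulVec_transpose, hMinv]
    have hXAc : X c ⬝ᵥ A c = grad U (u (c * h)) ⬝ᵥ A c
        + (gradMat g (u (c * h)) *ᵥ lam₀) ⬝ᵥ A c := add_dotProduct _ _ _
    have h1 : (h • B c) ⬝ᵥ (M⁻¹ *ᵥ v (c * h)) = h * (W c ⬝ᵥ B c) := by
      rw [smul_dotProduct]
      rw [show B c ⬝ᵥ (M⁻¹ *ᵥ v (c * h)) = W c ⬝ᵥ B c from by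
        rw [dotProduct_comm]]
      simp [smul_eq_mul]
    have h2 : v (c * h) ⬝ᵥ (M⁻¹ *ᵥ (h • B c)) = h * (W c ⬝ᵥ B c) := by
      rw [Matrix.mulVec_smul, dotProduct_smul, symmdot]
      simp [smul_eq_mul]
    have h3 : grad U (u (c * h)) ⬝ᵥ (h • A c) = h * (grad U (u (c * h)) ⬝ᵥ A c) := by
      rw [dotProduct_smul]; simp [smul_eq_mul]
    have h4 : (gradMat g (u (c * h)) *ᵥ lam₀) ⬝ᵥ (h • A c)
        = h * ((gradMat g (u (c * h)) *ᵥ lam₀) ⬝ᵥ A c) := by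
      rw [dotProduct_smul]; simp [smul_eq_mul]
    rw [h1, h2, h3, h4]
    simp only [hF', hXAc]
    ring
  -- FTC
  have ftc : ∫ c in (0:ℝ)..1, F' c = F 1 - F 0 :=
    intervalIntegral.integral_eq_sub_of_hasDerivAt hFderiv iF'
  -- key integral identities
  have key1 : ∀ j, (∫ c in (0:ℝ)..1, P j c • X c) = w j := by
    intro j
    have split : (∫ c in (0:ℝ)..1, P j c • X c)
        = (∫ c in (0:ℝ)..1, P j c • grad U (u (c * h)))
          + ∫ c in (0:ℝ)..1, P j c • (gradMat g (u (c * h)) *ᵥ lam₀) := by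
      rw [← intervalIntegral.integral_add (iPgU j) (iPgl j)]
      apply intervalIntegral.integral_congr
      intro c _
      simp [hX, smul_add]
    rw [split, hw]
    congr 1
    -- second piece equals rhoC *ᵥ lam₀, componentwise
    funext i
    rw [intInt_apply (iPgl j) i]
    have : ∀ c, (P j c • (gradMat g (u (c * h)) *ᵥ lam₀)) i
        = ∑ a, (P j c * gradMat g (u (c * h)) i a) * lam₀ a := by
      intro c
      simp [Matrix.mulVec, dotProduct, Finset.mul_sum, mul_assoc]
    simp_rw [this]
    rw [intervalIntegral.integral_finset_sum]
    · simp only [rhoC, Matrix.mulVec, dotProduct, Matrix.of_apply]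
      apply Finset.sum_congr rfl
      intro a _
      rw [intervalIntegral.integral_mul_const]
    · intro a _
      apply ContinuousOn.intervalIntegrable
      rw [huIcc]
      exact ((((cP j).continuousOn).mul
        ((cgradMat i a).comp_continuousOn cu)).mul continuousOn_const)
  have key2 : ∀ j, (∫ c in (0:ℝ)..1, P j c • W c) = γ j := by
    intro j
    have : (fun c => P j c • W c) = fun c => M⁻¹ *ᵥ (P j c • v (c * h)) := by
      funext c; rw [Matrix.mulVec_smul]
    rw [this, intInt_mulVec (iPv j) M⁻¹]
    rfl
  -- compute the integral
  have hint1 : ∫ c in (0:ℝ)..1, X c ⬝ᵥ A c = ∑ j ∈ Finset.range s, w j ⬝ᵥ γ j := by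
    have e : ∀ c, X c ⬝ᵥ A c = ∑ j ∈ Finset.range s, (P j c • X c) ⬝ᵥ γ j := by
      intro c
      simp only [hA, dotProduct, Finset.sum_apply, Finset.mul_sum, Pi.smul_apply,
        smul_eq_mul]
      rw [Finset.sum_comm]
      apply Finset.sum_congr rfl; intro j _
      apply Finset.sum_congr rfl; intro i _
      ring
    simp_rw [e]
    rw [intervalIntegral.integral_finset_sum]
    · apply Finset.sum_congr rfl
      intro j _
      rw [intInt_dot_const (iPX j), key1 j]
    · intro j _
      apply ContinuousOn.intervalIntegrable
      rw [huIcc]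
      simp only [dotProduct]
      exact continuousOn_finset_sum _ fun i _ =>
        ((((cP j).continuousOn).mul (continuousOn_pi.1 cX i)).mul continuousOn_const)
  have hint2 : ∫ c in (0:ℝ)..1, W c ⬝ᵥ B c = -∑ j ∈ Finset.range s, γ j ⬝ᵥ w j := by
    have e : ∀ c, W c ⬝ᵥ B c = -∑ j ∈ Finset.range s, (P j c • W c) ⬝ᵥ w j := by
      intro c
      have : W c ⬝ᵥ B c = -(W c ⬝ᵥ ∑ j ∈ Finset.range s, P j c • w j) := by
        rw [hB]; exact dotProduct_neg _ _
      rw [this]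
      congr 1
      simp only [dotProduct, Finset.sum_apply, Pi.smul_apply, smul_eq_mul, Finset.mul_sum]
      rw [Finset.sum_comm]
      apply Finset.sum_congr rfl; intro j _
      apply Finset.sum_congr rfl; intro i _
      ring
    simp_rw [e]
    rw [intervalIntegral.integral_neg, intervalIntegral.integral_finset_sum]
    · congr 1
      apply Finset.sum_congr rfl
      intro j _
      rw [intInt_dot_const (iPW j), key2 j]
    · intro j _
      apply ContinuousOn.intervalIntegrable
      rw [huIcc]
      simp only [dotProduct]
      exact continuousOn_finset_sum _ fun i _ =>
        ((((cP j).continuousOn).mul (continuousOn_pi.1 cW i)).mul continuousOn_const)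
  have hzero : ∫ c in (0:ℝ)..1, F' c = 0 := by
    have : ∫ c in (0:ℝ)..1, F' c
        = h * ((∫ c in (0:ℝ)..1, X c ⬝ᵥ A c) + ∫ c in (0:ℝ)..1, W c ⬝ᵥ B c) := by
      rw [hF']
      rw [intervalIntegral.integral_const_mul]
      rw [intervalIntegral.integral_add iXA iWB]
    rw [this, hint1, hint2]
    have : ∑ j ∈ Finset.range s, w j ⬝ᵥ γ j = ∑ j ∈ Finset.range s, γ j ⬝ᵥ w j := by
      apply Finset.sum_congr rfl
      intro j _
      exact dotProduct_comm _ _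
    rw [this]
    ring
  have hF10 : F 1 = F 0 := by
    have := ftc
    rw [hzero] at this
    linarith
  have e1 : F 1 = HamHat M U g (u h) (v h) lam₀ := by simp [hF]
  have e0 : F 0 = HamHat M U g q₀ p₀ lam₀ := by simp [hF, hu0, hv0]
  rw [← e1, ← e0, hF10]
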